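/- Let B* = G* ×_1 C* ×_2 R*, where C* ∈ ℝ^{p1×K1} and R* ∈ ℝ^{p2×K2} have orthonormal columns equal to the top K1 and K2 left singular vectors of B*_(1) and B*_(2), Σ_C = diag(σ_1(B*_(1)),…,σ_{K1}(B*_(1))), Σ_R = diag(σ_1(B*_(2)),…,σ_{K2}(B*_(2))), and σ̲ = min(σ_{K1}(B*_(1)), σ_{K2}(B*_(2))) > 0. Let (G, C, R) be another triple with ‖(C − C*)Σ_C‖_F^2 + ‖(R − R*)Σ_R‖_F^2 + ‖G − G*‖_F^2 ≤ ε^2·σ̲^2 for some ε < 1. Then ‖G ×_1 C ×_2 R − G* ×_1 C* ×_2 R*‖_F ≤ (1 + (3/2)·ε + ε^2 + (1/4)·ε^3)·(‖(C − C*)Σ_C‖_F + ‖(R − R*)Σ_R‖_F + ‖G − G*‖_F). -/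

import Mathlib

noncomputable section

open scoped BigOperators

namespace HomoPursuit

open Matrix

/-- Squared Frobenius norm of a real matrix. -/
def frobSq {m n : Type*} [Fintype m] [Fintype n] (A : Matrix m n ℝ) : ℝ :=
  ∑ i, ∑ j, (A i j) ^ 2

/-- Frobenius norm of a real matrix. -/
def frob {m n : Type*} [Fintype m] [Fintype n] (A : Matrix m n ℝ) : ℝ :=
  Real.sqrt (frobSq A)

/-- Frobenius inner product `⟨A, B⟩ = tr(Aᵀ B)`. -/
def mdot {m n : Type*} [Fintype m] [Fintype n] (A B : Matrix m n ℝ) : ℝ :=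
  ∑ i, ∑ j, A i j * B i j

/-- The `j`-th largest singular value of a real matrix (1-indexed); `0` if out of range. -/
def sval {m n : Type*} [Fintype m] [Fintype n] [DecidableEq n] (A : Matrix m n ℝ) (j : ℕ) : ℝ :=
  (((Finset.univ.val.map fun i =>
      Real.sqrt ((Matrix.conjTranspose_eq_transpose_of_trivial A ▸
        Matrix.isHermitian_conjTranspose_mul_self A : (Aᵀ * A).IsHermitian).eigenvalues i)).toList.insertionSort
      (· ≥ ·)).getD (j - 1) 0)

/-- Spectral (operator) norm: the largest singular value. -/
def spec {m n : Type*} [Fintype m] [Fintype n] [DecidableEq n] (A : Matrix m n ℝ) : ℝ :=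
  sval A 1

/-- The positive-semidefinite square root `(Aᵀ A)^{1/2}` of a Gram matrix. -/
def gramSqrt {m k : Type*} [Fintype m] [Fintype k] [DecidableEq k] (A : Matrix m k ℝ) :
    Matrix k k ℝ :=
  (Matrix.posSemidef_conjTranspose_mul_self A).1.eigenvectorUnitary.1 *
    Matrix.diagonal ((RCLike.ofReal : ℝ → ℝ) ∘ Real.sqrt ∘
      (Matrix.posSemidef_conjTranspose_mul_self A).1.eigenvalues) *
    (star (Matrix.posSemidef_conjTranspose_mul_self A).1.eigenvectorUnitary : Matrix k k ℝ)

/-- `(Aᵀ A)^{-1/2}`. -/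
def invGramSqrt {m k : Type*} [Fintype m] [Fintype k] [DecidableEq k] (A : Matrix m k ℝ) :
    Matrix k k ℝ :=
  (gramSqrt A)⁻¹

/-- Square root of a diagonal matrix with given (nonnegative) diagonal entries. -/
def diagSqrt {k : ℕ} (d : Fin k → ℝ) : Matrix (Fin k) (Fin k) ℝ :=
  Matrix.diagonal fun j => Real.sqrt (d j)

variable {p1 p2 n K1 K2 : ℕ}

/-- Mode-1 matricization of the tensor with frontal slices `B i`. -/
def mode1 (B : Fin n → Matrix (Fin p1) (Fin p2) ℝ) : Matrix (Fin p1) (Fin p2 × Fin n) ℝ :=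
  Matrix.of fun a bc => B bc.2 a bc.1

/-- Mode-2 matricization. -/
def mode2 (B : Fin n → Matrix (Fin p1) (Fin p2) ℝ) : Matrix (Fin p2) (Fin p1 × Fin n) ℝ :=
  Matrix.of fun b ac => B ac.2 ac.1 b

/-- Squared Frobenius norm of a third-order tensor given by its frontal slices. -/
def tfrobSq (B : Fin n → Matrix (Fin p1) (Fin p2) ℝ) : ℝ :=
  ∑ i, frobSq (B i)

/-- Frobenius norm of a third-order tensor. -/
def tfrob (B : Fin n → Matrix (Fin p1) (Fin p2) ℝ) : ℝ :=
  Real.sqrt (tfrobSq B)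

/-- The Tucker product `G ×₁ C ×₂ R`, given by its frontal slices `C · G_i · Rᵀ`. -/
def tuck (G : Fin n → Matrix (Fin K1) (Fin K2) ℝ) (C : Matrix (Fin p1) (Fin K1) ℝ)
    (R : Matrix (Fin p2) (Fin K2) ℝ) (i : Fin n) : Matrix (Fin p1) (Fin p2) ℝ :=
  C * G i * Rᵀ

/-- `C̃` with `C̃ᵀ = (G ×₂ R)_(1)`, so that `(G ×₁ C ×₂ R)_(1) = C C̃ᵀ`. -/
def tildeOfGR (G : Fin n → Matrix (Fin K1) (Fin K2) ℝ) (R : Matrix (Fin p2) (Fin K2) ℝ) :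
    Matrix (Fin p2 × Fin n) (Fin K1) ℝ :=
  Matrix.of fun bc k => (G bc.2 * Rᵀ) k bc.1

/-- `R̃` with `R̃ᵀ = (G ×₁ C)_(2)`, so that `(G ×₁ C ×₂ R)_(2) = R R̃ᵀ`. -/
def tildeOfGC (G : Fin n → Matrix (Fin K1) (Fin K2) ℝ) (C : Matrix (Fin p1) (Fin K1) ℝ) :
    Matrix (Fin p1 × Fin n) (Fin K2) ℝ :=
  Matrix.of fun ac k => (C * G ac.2) ac.1 k


/-!
Write `ΔC = C - Cs`, `ΔR = R - Rs`, `ΔG = G - Gs`. The difference of the Tucker products expands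
trilinearly into three first-order terms, three second-order terms and one third-order term.
Since the columns of `Cs` are eigenvectors of `B₁ B₁ᵀ` (with `B₁` the mode-1 unfolding of the
true tensor) for the eigenvalues `SC²`, the mode-1 unfolding `M` of `Gs ×₂ Rs` has `M Mᵀ = SC²`,
so the term `ΔC ×₁ Gs ×₂ Rs` has norm exactly `‖ΔC SC‖`; symmetrically for `R`, and the term in
`ΔG` has norm `‖ΔG‖` by orthonormality. The higher-order terms are bounded by submultiplicativity
and `σ ‖ΔC‖ ≤ ‖ΔC SC‖`, `σ ‖ΔR‖ ≤ ‖ΔR SR‖`; the budget `a² + b² + g² ≤ ε² σ²` on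
`a = ‖ΔC SC‖`, `b = ‖ΔR SR‖`, `g = ‖ΔG‖` then bounds their sum by a multiple of `a + b + g`.
-/

section Frobenius

variable {l m k : Type*} [Fintype l] [Fintype m] [Fintype k]

attribute [local instance] Matrix.frobeniusNormedAddCommGroup

lemma frobSq_nonneg (A : Matrix m k ℝ) : 0 ≤ frobSq A := by
  unfold frobSq; positivity

lemma sq_frob (A : Matrix m k ℝ) : frob A ^ 2 = frobSq A :=
  Real.sq_sqrt (frobSq_nonneg A)

lemma frob_nonneg (A : Matrix m k ℝ) : 0 ≤ frob A :=
  Real.sqrt_nonneg _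

lemma frobSq_eq_trace (A : Matrix m k ℝ) : frobSq A = (Aᵀ * A).trace := by
  simp only [frobSq, trace, diag, mul_apply, transpose_apply, sq]
  exact Finset.sum_comm

lemma frob_eq_norm (A : Matrix m k ℝ) : frob A = ‖A‖ := by
  simp only [frobenius_norm_def, frob, frobSq, Real.sqrt_eq_rpow, Real.norm_eq_abs,
    Real.rpow_two, sq_abs]

lemma frob_add_le (A B : Matrix m k ℝ) : frob (A + B) ≤ frob A + frob B := by
  simpa only [frob_eq_norm] using norm_add_le A B

lemma frob_mul_le (A : Matrix l m ℝ) (B : Matrix m k ℝ) : frob (A * B) ≤ frob A * frob B := by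
  simpa only [frob_eq_norm] using frobenius_norm_mul A B

lemma frob_transpose (A : Matrix m k ℝ) : frob Aᵀ = frob A := by
  simpa only [frob_eq_norm] using frobenius_norm_transpose A

lemma frob_mul_eq_of_transpose_mul_eq {M : Matrix m k ℝ} {N : Matrix l k ℝ}
    (h : Mᵀ * M = Nᵀ * N) {o : Type*} [Fintype o] (A : Matrix k o ℝ) :
    frob (M * A) = frob (N * A) := by
  rw [frob, frob, frobSq_eq_trace, frobSq_eq_trace, transpose_mul, transpose_mul,
    Matrix.mul_assoc, Matrix.mul_assoc, ← Matrix.mul_assoc Mᵀ, ← Matrix.mul_assoc Nᵀ, h]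

lemma frob_mul_eq_of_mul_transpose_eq {M : Matrix k m ℝ} {N : Matrix k l ℝ}
    (h : M * Mᵀ = N * Nᵀ) {o : Type*} [Fintype o] (A : Matrix o k ℝ) :
    frob (A * M) = frob (A * N) := by
  rw [← frob_transpose, transpose_mul,
    frob_mul_eq_of_transpose_mul_eq (N := Nᵀ) (by simpa using h), ← transpose_mul,
    frob_transpose]

lemma frob_mul_of_orthonormal [DecidableEq k] {C : Matrix m k ℝ} (hC : Cᵀ * C = 1)
    (A : Matrix k l ℝ) : frob (C * A) = frob A := by
  simpa using frob_mul_eq_of_transpose_mul_eq (M := C) (N := (1 : Matrix k k ℝ))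
    (by rw [hC, transpose_one, Matrix.one_mul]) A

lemma mul_transpose_eq_of_orthonormal_eigen [DecidableEq k] {C : Matrix m k ℝ}
    (hC : Cᵀ * C = 1) {M : Matrix k l ℝ} {S : Matrix k k ℝ}
    (h : C * M * (C * M)ᵀ * C = C * S) : M * Mᵀ = S := by
  have := congrArg (Cᵀ * ·) h
  simpa only [transpose_mul, Matrix.mul_assoc, hC, Matrix.mul_one, ← Matrix.mul_assoc Cᵀ C,
    Matrix.one_mul] using this

lemma mul_frob_le_frob_mul_diagonal [DecidableEq k] {σ : ℝ} {d : k → ℝ} (hσ : 0 ≤ σ)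
    (hd : ∀ j, σ ≤ d j) (A : Matrix m k ℝ) : σ * frob A ≤ frob (A * diagonal d) := by
  rw [frob, ← Real.sqrt_sq hσ, ← Real.sqrt_mul (sq_nonneg σ)]
  refine Real.sqrt_le_sqrt ?_
  simp only [frobSq, Finset.mul_sum, mul_diagonal]
  refine Finset.sum_le_sum fun i _ => Finset.sum_le_sum fun j _ => ?_
  rw [mul_pow, mul_comm (σ ^ 2)]
  exact mul_le_mul_of_nonneg_left (pow_le_pow_left₀ hσ (hd j) 2) (sq_nonneg _)

end Frobenius

lemma antitone_getD_of_pairwise_ge {α : Type*} [Preorder α] {l : List α} {d : α}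
    (hl : l.Pairwise (· ≥ ·)) (hd : ∀ x ∈ l, d ≤ x) : Antitone fun i => l.getD i d := by
  intro i j hij
  dsimp only
  by_cases hj : j < l.length
  · rw [List.getD_eq_getElem l d hj, List.getD_eq_getElem l d (hij.trans_lt hj)]
    rcases hij.eq_or_lt with rfl | hlt
    · exact le_rfl
    · exact hl.rel_get_of_lt (a := ⟨i, hij.trans_lt hj⟩) (b := ⟨j, hj⟩) hlt
  · rw [List.getD_eq_default l d (not_lt.mp hj)]
    by_cases hi : i < l.length
    · exact List.getD_eq_getElem l d hi ▸ hd _ (List.getElem_mem hi)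
    · rw [List.getD_eq_default l d (not_lt.mp hi)]

lemma sval_antitone {m k : Type*} [Fintype m] [Fintype k] [DecidableEq k] (A : Matrix m k ℝ) :
    Antitone (sval A) := by
  refine (antitone_getD_of_pairwise_ge (List.pairwise_insertionSort _ _) ?_).comp_monotone
    fun _ _ h => Nat.sub_le_sub_right h 1
  intro x hx
  obtain ⟨y, -, rfl⟩ :=
    Multiset.mem_map.mp (Multiset.mem_toList.mp ((List.mem_insertionSort _).mp hx))
  exact Real.sqrt_nonneg _

section Tensor

variable {q : ℕ}

lemma tfrobSq_eq_frobSq_mode1 (B : Fin n → Matrix (Fin p1) (Fin p2) ℝ) :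
    tfrobSq B = frobSq (mode1 B) := by
  simp only [tfrobSq, frobSq, mode1, of_apply, Fintype.sum_prod_type]
  rw [Finset.sum_comm]
  exact Finset.sum_congr rfl fun _ _ => Finset.sum_comm

lemma tfrob_eq_frob_mode1 (B : Fin n → Matrix (Fin p1) (Fin p2) ℝ) : tfrob B = frob (mode1 B) :=
  congrArg Real.sqrt (tfrobSq_eq_frobSq_mode1 B)

lemma tfrob_eq_frob_mode2 (B : Fin n → Matrix (Fin p1) (Fin p2) ℝ) :
    tfrob B = frob (mode2 B) := by
  rw [tfrob, frob]
  congr 1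
  simp only [tfrobSq, frobSq, mode2, of_apply, Fintype.sum_prod_type]
  rw [Finset.sum_congr rfl fun _ _ => Finset.sum_comm, Finset.sum_comm]
  exact Finset.sum_congr rfl fun _ _ => Finset.sum_comm

lemma tfrob_nonneg (B : Fin n → Matrix (Fin p1) (Fin p2) ℝ) : 0 ≤ tfrob B :=
  Real.sqrt_nonneg _

lemma sq_tfrob (B : Fin n → Matrix (Fin p1) (Fin p2) ℝ) : tfrob B ^ 2 = tfrobSq B :=
  Real.sq_sqrt (Finset.sum_nonneg fun _ _ => frobSq_nonneg _)

lemma tfrob_add_le (X Y : Fin n → Matrix (Fin p1) (Fin p2) ℝ) :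
    tfrob (X + Y) ≤ tfrob X + tfrob Y := by
  simp only [tfrob_eq_frob_mode1]
  exact frob_add_le (mode1 X) (mode1 Y)

lemma mode1_mul_left (M : Matrix (Fin q) (Fin p1) ℝ)
    (X : Fin n → Matrix (Fin p1) (Fin p2) ℝ) :
    mode1 (fun i => M * X i) = M * mode1 X := by
  ext a bc
  simp [mode1, mul_apply]

lemma mode2_mul_transpose_right (N : Matrix (Fin q) (Fin p2) ℝ)
    (X : Fin n → Matrix (Fin p1) (Fin p2) ℝ) :
    mode2 (fun i => X i * Nᵀ) = N * mode2 X := by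
  ext b ac
  simp [mode2, mul_apply, mul_comm]

lemma tfrob_mul_transpose_right_le (N : Matrix (Fin q) (Fin p2) ℝ)
    (X : Fin n → Matrix (Fin p1) (Fin p2) ℝ) :
    tfrob (fun i => X i * Nᵀ) ≤ frob N * tfrob X := by
  rw [tfrob_eq_frob_mode2, tfrob_eq_frob_mode2, mode2_mul_transpose_right]
  exact frob_mul_le _ _

lemma tfrob_mul_transpose_right_of_orthonormal {R : Matrix (Fin q) (Fin p2) ℝ}
    (hR : Rᵀ * R = 1) (X : Fin n → Matrix (Fin p1) (Fin p2) ℝ) :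
    tfrob (fun i => X i * Rᵀ) = tfrob X := by
  rw [tfrob_eq_frob_mode2, tfrob_eq_frob_mode2, mode2_mul_transpose_right,
    frob_mul_of_orthonormal hR]

lemma tuck_sub_tuck (G Gs : Fin n → Matrix (Fin K1) (Fin K2) ℝ)
    (C Cs : Matrix (Fin p1) (Fin K1) ℝ) (R Rs : Matrix (Fin p2) (Fin K2) ℝ) :
    tuck G C R - tuck Gs Cs Rs =
      tuck Gs (C - Cs) Rs + tuck Gs Cs (R - Rs) + tuck (G - Gs) Cs Rs +
        tuck Gs (C - Cs) (R - Rs) + tuck (G - Gs) (C - Cs) Rs + tuck (G - Gs) Cs (R - Rs) +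
        tuck (G - Gs) (C - Cs) (R - Rs) := by
  funext i
  simp only [tuck, Pi.add_apply, Pi.sub_apply, transpose_sub, Matrix.sub_mul, Matrix.mul_sub]
  abel

lemma mode1_tuck (G : Fin n → Matrix (Fin K1) (Fin K2) ℝ) (C : Matrix (Fin q) (Fin K1) ℝ)
    (R : Matrix (Fin p2) (Fin K2) ℝ) : mode1 (tuck G C R) = C * mode1 (fun i => G i * Rᵀ) := by
  rw [← mode1_mul_left]
  exact congrArg mode1 (funext fun i => Matrix.mul_assoc _ _ _)

lemma mode2_tuck (G : Fin n → Matrix (Fin K1) (Fin K2) ℝ) (C : Matrix (Fin p1) (Fin K1) ℝ)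
    (R : Matrix (Fin q) (Fin K2) ℝ) : mode2 (tuck G C R) = R * mode2 (fun i => C * G i) :=
  mode2_mul_transpose_right R _

lemma tfrob_tuck_le_left (G : Fin n → Matrix (Fin K1) (Fin K2) ℝ)
    (C : Matrix (Fin q) (Fin K1) ℝ) (R : Matrix (Fin p2) (Fin K2) ℝ) :
    tfrob (tuck G C R) ≤ frob C * tfrob (fun i => G i * Rᵀ) := by
  rw [tfrob_eq_frob_mode1, tfrob_eq_frob_mode1, mode1_tuck]
  exact frob_mul_le _ _

lemma tfrob_tuck_of_orthonormal_left (G : Fin n → Matrix (Fin K1) (Fin K2) ℝ)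
    {C : Matrix (Fin q) (Fin K1) ℝ} (hC : Cᵀ * C = 1) (R : Matrix (Fin p2) (Fin K2) ℝ) :
    tfrob (tuck G C R) = tfrob (fun i => G i * Rᵀ) := by
  rw [tfrob_eq_frob_mode1, tfrob_eq_frob_mode1, mode1_tuck, frob_mul_of_orthonormal hC]

lemma tfrob_tuck_eq_frob_mul_of_eigen_left {Gs : Fin n → Matrix (Fin K1) (Fin K2) ℝ}
    {Cs : Matrix (Fin p1) (Fin K1) ℝ} {Rs : Matrix (Fin p2) (Fin K2) ℝ}
    {S : Matrix (Fin K1) (Fin K1) ℝ}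
    (hCs : Csᵀ * Cs = 1) (hS : Sᵀ = S)
    (heig : mode1 (tuck Gs Cs Rs) * (mode1 (tuck Gs Cs Rs))ᵀ * Cs = Cs * (S * S))
    (A : Matrix (Fin q) (Fin K1) ℝ) : tfrob (tuck Gs A Rs) = frob (A * S) := by
  rw [mode1_tuck] at heig
  rw [tfrob_eq_frob_mode1, mode1_tuck]
  refine frob_mul_eq_of_mul_transpose_eq ?_ A
  rw [hS]
  exact mul_transpose_eq_of_orthonormal_eigen hCs heig

lemma tfrob_tuck_eq_frob_mul_of_eigen_right {Gs : Fin n → Matrix (Fin K1) (Fin K2) ℝ}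
    {Cs : Matrix (Fin p1) (Fin K1) ℝ} {Rs : Matrix (Fin p2) (Fin K2) ℝ}
    {S : Matrix (Fin K2) (Fin K2) ℝ}
    (hRs : Rsᵀ * Rs = 1) (hS : Sᵀ = S)
    (heig : mode2 (tuck Gs Cs Rs) * (mode2 (tuck Gs Cs Rs))ᵀ * Rs = Rs * (S * S))
    (A : Matrix (Fin q) (Fin K2) ℝ) : tfrob (tuck Gs Cs A) = frob (A * S) := by
  rw [mode2_tuck] at heig
  rw [tfrob_eq_frob_mode2, mode2_tuck]
  refine frob_mul_eq_of_mul_transpose_eq ?_ A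
  rw [hS]
  exact mul_transpose_eq_of_orthonormal_eigen hRs heig

lemma tfrob_tuck_sub_tuck_le {Cs : Matrix (Fin p1) (Fin K1) ℝ}
    {Rs : Matrix (Fin p2) (Fin K2) ℝ} (hCs : Csᵀ * Cs = 1) (hRs : Rsᵀ * Rs = 1)
    (G Gs : Fin n → Matrix (Fin K1) (Fin K2) ℝ)
    (C : Matrix (Fin p1) (Fin K1) ℝ) (R : Matrix (Fin p2) (Fin K2) ℝ) :
    tfrob (tuck G C R - tuck Gs Cs Rs) ≤
      tfrob (tuck Gs (C - Cs) Rs) + tfrob (tuck Gs Cs (R - Rs)) + tfrob (G - Gs) +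
        frob (C - Cs) * tfrob (tuck Gs Cs (R - Rs)) + frob (C - Cs) * tfrob (G - Gs) +
        frob (R - Rs) * tfrob (G - Gs) + frob (C - Cs) * (frob (R - Rs) * tfrob (G - Gs)) := by
  have hGR : tfrob (fun i => (G - Gs) i * (R - Rs)ᵀ) ≤ frob (R - Rs) * tfrob (G - Gs) :=
    tfrob_mul_transpose_right_le _ _
  have h3 : tfrob (tuck (G - Gs) Cs Rs) = tfrob (G - Gs) := by
    rw [tfrob_tuck_of_orthonormal_left _ hCs, tfrob_mul_transpose_right_of_orthonormal hRs]
  have h4 :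
      tfrob (tuck Gs (C - Cs) (R - Rs)) ≤ frob (C - Cs) * tfrob (tuck Gs Cs (R - Rs)) := by
    rw [tfrob_tuck_of_orthonormal_left _ hCs]
    exact tfrob_tuck_le_left _ _ _
  have h5 : tfrob (tuck (G - Gs) (C - Cs) Rs) ≤ frob (C - Cs) * tfrob (G - Gs) := by
    rw [← tfrob_mul_transpose_right_of_orthonormal hRs (G - Gs)]
    exact tfrob_tuck_le_left _ _ _
  have h6 : tfrob (tuck (G - Gs) Cs (R - Rs)) ≤ frob (R - Rs) * tfrob (G - Gs) :=
    (tfrob_tuck_of_orthonormal_left _ hCs _).trans_le hGR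
  have h7 : tfrob (tuck (G - Gs) (C - Cs) (R - Rs)) ≤
      frob (C - Cs) * (frob (R - Rs) * tfrob (G - Gs)) :=
    (tfrob_tuck_le_left _ _ _).trans (mul_le_mul_of_nonneg_left hGR (frob_nonneg _))
  rw [tuck_sub_tuck]
  refine (tfrob_add_le _ _).trans (add_le_add ?_ h7)
  refine (tfrob_add_le _ _).trans (add_le_add ?_ h6)
  refine (tfrob_add_le _ _).trans (add_le_add ?_ h5)
  refine (tfrob_add_le _ _).trans (add_le_add ?_ h4)
  refine (tfrob_add_le _ _).trans (add_le_add ?_ h3.le)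
  exact tfrob_add_le _ _

end Tensor

lemma perturbation_coefficient_bound {a b g ca cr σ ε : ℝ} (ha : 0 ≤ a) (hb : 0 ≤ b)
    (hg : 0 ≤ g) (hcr0 : 0 ≤ cr) (hσ : 0 < σ) (hε : 0 ≤ ε) (hca : σ * ca ≤ a)
    (hcr : σ * cr ≤ b) (hq : a ^ 2 + b ^ 2 + g ^ 2 ≤ ε ^ 2 * σ ^ 2) :
    a + b + g + ca * b + ca * g + cr * g + ca * (cr * g) ≤
      (1 + 3 / 2 * ε + ε ^ 2 + 1 / 4 * ε ^ 3) * (a + b + g) := by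
  set s := a + b + g
  have hs0 : 0 ≤ s := by positivity
  have hs : s ≤ 3 * (ε * σ) := by
    refine (pow_le_pow_iff_left₀ hs0 (by positivity) two_ne_zero).mp ?_
    nlinarith [sq_nonneg (a - b), sq_nonneg (a - g), sq_nonneg (b - g)]
  have hsecond : ca * b + ca * g + cr * g ≤ 3 / 2 * ε * s := by
    refine le_of_mul_le_mul_left ?_ hσ
    have hpair : a * b + a * g + b * g ≤ s ^ 2 / 2 := by
      nlinarith [sq_nonneg a, sq_nonneg b, sq_nonneg g]
    nlinarith [mul_le_mul_of_nonneg_right hca hb, mul_le_mul_of_nonneg_right hca hg,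
      mul_le_mul_of_nonneg_right hcr hg, mul_le_mul_of_nonneg_left hs hs0]
  have hthird : ca * (cr * g) ≤ ε ^ 2 * s := by
    refine le_of_mul_le_mul_left ?_ (pow_pos hσ 2)
    have hprod : σ * ca * (σ * cr) * g ≤ a * b * g :=
      mul_le_mul_of_nonneg_right (mul_le_mul hca hcr (by positivity) ha) hg
    have hab : 2 * (a * b) ≤ ε ^ 2 * σ ^ 2 := by nlinarith [sq_nonneg (a - b), sq_nonneg g]
    have hgs : g ≤ s := by linarith
    nlinarith [mul_le_mul hab hgs hg (by positivity)]
  nlinarith [pow_nonneg hε 3]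

theorem tucker_product_perturbation_general
    (p1 p2 n K1 K2 : ℕ)
    (Gs G : Fin n → Matrix (Fin K1) (Fin K2) ℝ)
    (Cs C : Matrix (Fin p1) (Fin K1) ℝ) (Rs R : Matrix (Fin p2) (Fin K2) ℝ) (ε : ℝ)
    (SC : Matrix (Fin K1) (Fin K1) ℝ) (SR : Matrix (Fin K2) (Fin K2) ℝ) (σlow : ℝ)
    (hSC : SC = Matrix.diagonal fun j : Fin K1 => sval (mode1 (tuck Gs Cs Rs)) ((j : ℕ) + 1))
    (hSR : SR = Matrix.diagonal fun j : Fin K2 => sval (mode2 (tuck Gs Cs Rs)) ((j : ℕ) + 1))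
    (hσlow : σlow = min (sval (mode1 (tuck Gs Cs Rs)) K1) (sval (mode2 (tuck Gs Cs Rs)) K2))
    (hCorth : Csᵀ * Cs = 1) (hRorth : Rsᵀ * Rs = 1)
    (hCeig : mode1 (tuck Gs Cs Rs) * (mode1 (tuck Gs Cs Rs))ᵀ * Cs = Cs * (SC * SC))
    (hReig : mode2 (tuck Gs Cs Rs) * (mode2 (tuck Gs Cs Rs))ᵀ * Rs = Rs * (SR * SR))
    (hσpos : 0 < σlow)
    (hε0 : 0 ≤ ε)
    (hpert : frobSq ((C - Cs) * SC) + frobSq ((R - Rs) * SR) +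
        tfrobSq (fun i => G i - Gs i) ≤ ε ^ 2 * σlow ^ 2) :
    tfrob (fun i => tuck G C R i - tuck Gs Cs Rs i) ≤
      (1 + 3 / 2 * ε + ε ^ 2 + 1 / 4 * ε ^ 3) *
        (frob ((C - Cs) * SC) + frob ((R - Rs) * SR) + tfrob (fun i => G i - Gs i)) := by
  have hσC : σlow * frob (C - Cs) ≤ frob ((C - Cs) * SC) := by
    rw [hSC]
    exact mul_frob_le_frob_mul_diagonal hσpos.le
      (fun j => hσlow ▸ (min_le_left _ _).trans (sval_antitone _ j.isLt)) _
  have hσR : σlow * frob (R - Rs) ≤ frob ((R - Rs) * SR) := by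
    rw [hSR]
    exact mul_frob_le_frob_mul_diagonal hσpos.le
      (fun j => hσlow ▸ (min_le_right _ _).trans (sval_antitone _ j.isLt)) _
  have hexp := tfrob_tuck_sub_tuck_le hCorth hRorth G Gs C R
  rw [tfrob_tuck_eq_frob_mul_of_eigen_left hCorth (hSC ▸ diagonal_transpose _) hCeig,
    tfrob_tuck_eq_frob_mul_of_eigen_right hRorth (hSR ▸ diagonal_transpose _) hReig] at hexp
  rw [← sq_frob, ← sq_frob, ← sq_tfrob] at hpert
  exact hexp.trans (perturbation_coefficient_bound (frob_nonneg _) (frob_nonneg _)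
    (tfrob_nonneg _) (frob_nonneg _) hσpos hε0 hσC hσR hpert)

/-- **Lemma (Tucker product perturbation, Frobenius bound).** -/
theorem tucker_product_perturbation
    (p1 p2 n K1 K2 : ℕ)
    (Gs G : Fin n → Matrix (Fin K1) (Fin K2) ℝ)
    (Cs C : Matrix (Fin p1) (Fin K1) ℝ) (Rs R : Matrix (Fin p2) (Fin K2) ℝ) (ε : ℝ)
    (SC : Matrix (Fin K1) (Fin K1) ℝ) (SR : Matrix (Fin K2) (Fin K2) ℝ) (σlow : ℝ)
    (hSC : SC = Matrix.diagonal fun j : Fin K1 => sval (mode1 (tuck Gs Cs Rs)) ((j : ℕ) + 1))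
    (hSR : SR = Matrix.diagonal fun j : Fin K2 => sval (mode2 (tuck Gs Cs Rs)) ((j : ℕ) + 1))
    (hσlow : σlow = min (sval (mode1 (tuck Gs Cs Rs)) K1) (sval (mode2 (tuck Gs Cs Rs)) K2))
    (hCorth : Csᵀ * Cs = 1) (hRorth : Rsᵀ * Rs = 1)
    (hCeig : mode1 (tuck Gs Cs Rs) * (mode1 (tuck Gs Cs Rs))ᵀ * Cs = Cs * (SC * SC))
    (hReig : mode2 (tuck Gs Cs Rs) * (mode2 (tuck Gs Cs Rs))ᵀ * Rs = Rs * (SR * SR))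
    (hσpos : 0 < σlow)
    (hε0 : 0 ≤ ε) (hε1 : ε < 1)
    (hpert : frobSq ((C - Cs) * SC) + frobSq ((R - Rs) * SR) +
        tfrobSq (fun i => G i - Gs i) ≤ ε ^ 2 * σlow ^ 2) :
    tfrob (fun i => tuck G C R i - tuck Gs Cs Rs i) ≤
      (1 + 3 / 2 * ε + ε ^ 2 + 1 / 4 * ε ^ 3) *
        (frob ((C - Cs) * SC) + frob ((R - Rs) * SR) + tfrob (fun i => G i - Gs i)) :=
  tucker_product_perturbation_general p1 p2 n K1 K2 Gs G Cs C Rs R ε SC SR σlow hSC hSR hσlow hCorth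
    hRorth hCeig hReig hσpos hε0 hpert

end HomoPursuit
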